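/- arXiv:1811.01220 — 5 statements merged into one kernel-verified Lean document; each statement's English description precedes it below -/
import Mathlib

section
/- Let f : ℝ → ℝ be p times continuously differentiable with its p-th derivative β-Hölder continuous with constant L, β ∈ (0,1]. Then for each j with 1 ≤ j ≤ p and all x, s ∈ ℝ, |f^{(j)}(x+s) - (d^j/ds^j) T_p(x,s)| ≤ (L / ∏_{i=1}^{p-j}(i+β)) |s|^{p-j+β}, where T_p(x,s) = ∑_{ℓ=0}^{p} f^{(ℓ)}(x) s^ℓ / ℓ! and the derivative is taken with respect to s. -/
open Finset intervalIntegral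

lemma hasDerivAt_polysum (N : ℕ) (b : ℕ → ℝ) (t : ℝ) :
    HasDerivAt (fun t : ℝ => ∑ m ∈ Finset.range (N + 1), b m * t ^ m / m.factorial)
      (∑ m ∈ Finset.range N, b (m + 1) * t ^ m / m.factorial) t := by
  have h : ∀ m : ℕ, HasDerivAt (fun t : ℝ => b m * t ^ m / m.factorial)
      (b m * ((m : ℝ) * t ^ (m - 1)) / m.factorial) t := fun m =>
    (((hasDerivAt_pow m t).const_mul (b m)).div_const _)
  have h2 : HasDerivAt (fun t : ℝ => ∑ m ∈ Finset.range (N + 1), b m * t ^ m / m.factorial)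
      (∑ m ∈ Finset.range (N + 1), b m * ((m : ℝ) * t ^ (m - 1)) / m.factorial) t :=
    HasDerivAt.fun_sum (fun m _ => h m)
  convert h2 using 1
  rw [Finset.sum_range_succ']
  simp only [Nat.cast_zero, zero_mul, mul_zero, zero_div, add_zero]
  apply Finset.sum_congr rfl
  intro m _
  rw [Nat.factorial_succ]
  push_cast
  have hm : (m.factorial : ℝ) ≠ 0 := Nat.cast_ne_zero.mpr m.factorial_ne_zero
  field_simp

lemma iteratedDeriv_polysum (b : ℕ → ℝ) (N : ℕ) :
    ∀ j : ℕ, j ≤ N →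
      iteratedDeriv j (fun t : ℝ => ∑ m ∈ Finset.range (N + 1), b m * t ^ m / m.factorial)
        = fun t : ℝ => ∑ m ∈ Finset.range (N - j + 1), b (m + j) * t ^ m / m.factorial := by
  intro j
  induction j with
  | zero => intro _; simp
  | succ j ih =>
    intro hj
    have hj' : j ≤ N := le_of_lt hj
    rw [iteratedDeriv_succ, ih hj']
    have hNj : N - j = (N - (j + 1)) + 1 := by omega
    rw [hNj]
    funext t
    rw [show (fun t : ℝ => ∑ m ∈ Finset.range ((N - (j+1)) + 1 + 1), b (m + j) * t ^ m / m.factorial)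
        = (fun t : ℝ => ∑ m ∈ Finset.range ((N - (j+1)) + 1 + 1), (fun m => b (m + j)) m * t ^ m / m.factorial) from rfl]
    rw [(hasDerivAt_polysum ((N - (j+1)) + 1) (fun m => b (m + j)) t).deriv]
    apply Finset.sum_congr rfl
    intro m _
    have : m + 1 + j = m + (j + 1) := by omega
    rw [this]

lemma integral_abs_rpow {a : ℝ} (ha : 0 < a) {s : ℝ} (hs : 0 ≤ s) :
    ∫ t in (0:ℝ)..s, |t| ^ a = s ^ (a + 1) / (a + 1) := by
  have h1 : ∫ t in (0:ℝ)..s, |t| ^ a = ∫ t in (0:ℝ)..s, t ^ a := by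
    apply intervalIntegral.integral_congr
    intro t ht
    rw [Set.uIcc_of_le hs] at ht
    show |t| ^ a = t ^ a
    rw [abs_of_nonneg ht.1]
  rw [h1, integral_rpow (Or.inl (by linarith)), Real.zero_rpow (by linarith), sub_zero]

lemma aux_remainder (β L : ℝ) (hβ0 : 0 < β) (hL : 0 ≤ L) :
    ∀ q : ℕ, ∀ g : ℝ → ℝ, ContDiff ℝ q g →
      (∀ x y : ℝ, |iteratedDeriv q g x - iteratedDeriv q g y| ≤ L * |x - y| ^ β) →
      ∀ x s : ℝ,
        |g (x + s) - ∑ m ∈ Finset.range (q + 1), iteratedDeriv m g x * s ^ m / m.factorial|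
          ≤ L / (∏ i ∈ Finset.Icc 1 q, ((i : ℝ) + β)) * |s| ^ ((q : ℝ) + β) := by
  intro q
  induction q with
  | zero =>
    intro g hg hHol x s
    have := hHol (x + s) x
    simpa using this
  | succ q ih =>
    intro g hg hHol x s
    have hg1 : Differentiable ℝ g := hg.differentiable (by simp)
    have hg' : ContDiff ℝ q (deriv g) := by
      have := ContDiff.iterate_deriv' q 1 hg
      simpa using this
    have hHol' : ∀ x y : ℝ, |iteratedDeriv q (deriv g) x - iteratedDeriv q (deriv g) y|
        ≤ L * |x - y| ^ β := by
      intro x y; rw [← iteratedDeriv_succ']; exact hHol x y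
    have IH := ih (deriv g) hg' hHol'
    set P : ℝ := ∏ i ∈ Finset.Icc 1 q, ((i : ℝ) + β) with hP
    have hPpos : 0 < P := Finset.prod_pos (fun i hi => by positivity)
    set a : ℝ := (q : ℝ) + β with ha_def
    have ha : 0 < a := by positivity
    set C : ℝ := L / P with hC_def
    have hC : 0 ≤ C := div_nonneg hL hPpos.le
    set F : ℝ → ℝ := fun t => g (x + t)
      - ∑ m ∈ Finset.range (q + 2), iteratedDeriv m g x * t ^ m / m.factorial with hF_def
    set F' : ℝ → ℝ := fun t => deriv g (x + t)
      - ∑ m ∈ Finset.range (q + 1), iteratedDeriv (m + 1) g x * t ^ m / m.factorial with hF'_def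
    have hFderiv : ∀ t : ℝ, HasDerivAt F (F' t) t := by
      intro t
      have h1 : HasDerivAt (fun t : ℝ => g (x + t)) (deriv g (x + t)) t := by
        have := ((hg1 (x + t)).hasDerivAt).comp t ((hasDerivAt_id t).const_add x)
        simpa [Function.comp_def] using this
      exact h1.sub (hasDerivAt_polysum (q + 1) (fun m => iteratedDeriv m g x) t)
    have hbound : ∀ t : ℝ, |F' t| ≤ C * |t| ^ a := by
      intro t
      have h := IH x t
      simp only [hF'_def, iteratedDeriv_succ']
      exact h
    have hF0 : F 0 = 0 := by
      simp [hF_def, Finset.sum_range_succ', pow_succ]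
    have hc1 : Continuous (deriv g) := hg.continuous_deriv (by exact_mod_cast q.succ_pos)
    have hFcont : Continuous F' := by
      apply Continuous.sub
      · exact hc1.comp (continuous_const.add continuous_id)
      · exact continuous_finset_sum _ fun m _ => (continuous_const.mul (continuous_pow m)).div_const _
    have hMcont : Continuous fun t : ℝ => C * |t| ^ a :=
      continuous_const.mul (continuous_abs.rpow_const fun t => Or.inr ha.le)
    have key : F s = ∫ t in (0:ℝ)..s, F' t := by
      rw [intervalIntegral.integral_eq_sub_of_hasDerivAt (fun t _ => hFderiv t)
        (hFcont.intervalIntegrable 0 s), hF0, sub_zero]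
    have main : |F s| ≤ C * (|s| ^ (a + 1) / (a + 1)) := by
      rcases le_or_gt 0 s with hs | hs
      · calc |F s| = |∫ t in (0:ℝ)..s, F' t| := by rw [key]
          _ ≤ ∫ t in (0:ℝ)..s, |F' t| := by
              simpa using intervalIntegral.norm_integral_le_integral_norm (f := F') hs
          _ ≤ ∫ t in (0:ℝ)..s, C * |t| ^ a :=
              intervalIntegral.integral_mono_on hs (hFcont.abs.intervalIntegrable 0 s)
                (hMcont.intervalIntegrable 0 s) (fun t _ => hbound t)
          _ = C * ∫ t in (0:ℝ)..s, |t| ^ a := intervalIntegral.integral_const_mul _ _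
          _ = C * (s ^ (a + 1) / (a + 1)) := by rw [integral_abs_rpow ha hs]
          _ = C * (|s| ^ (a + 1) / (a + 1)) := by rw [abs_of_nonneg hs]
      · have hs' : (0:ℝ) ≤ -s := by linarith
        have hflip : (∫ t in s..(0:ℝ), |t| ^ a) = ∫ t in (0:ℝ)..(-s), |t| ^ a := by
          have h2 := intervalIntegral.integral_comp_neg (a := (0:ℝ)) (b := -s)
            (fun t => |t| ^ a)
          simp only [abs_neg] at h2
          simpa using h2.symm
        calc |F s| = |∫ t in s..(0:ℝ), F' t| := by
              rw [key, intervalIntegral.integral_symm, abs_neg]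
          _ ≤ ∫ t in s..(0:ℝ), |F' t| := by
              simpa using intervalIntegral.norm_integral_le_integral_norm (f := F') hs.le
          _ ≤ ∫ t in s..(0:ℝ), C * |t| ^ a :=
              intervalIntegral.integral_mono_on hs.le (hFcont.abs.intervalIntegrable s 0)
                (hMcont.intervalIntegrable s 0) (fun t _ => hbound t)
          _ = C * ∫ t in s..(0:ℝ), |t| ^ a := intervalIntegral.integral_const_mul _ _
          _ = C * ((-s) ^ (a + 1) / (a + 1)) := by rw [hflip, integral_abs_rpow ha hs']
          _ = C * (|s| ^ (a + 1) / (a + 1)) := by rw [abs_of_neg hs]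
    have hprod : (∏ i ∈ Finset.Icc 1 (q + 1), ((i : ℝ) + β)) = P * (((q:ℝ) + 1) + β) := by
      rw [Finset.prod_Icc_succ_top (by omega : 1 ≤ q + 1)]
      push_cast
      ring
    have hexp : ((q + 1 : ℕ) : ℝ) + β = a + 1 := by push_cast [ha_def]; ring
    have hrhs : L / (∏ i ∈ Finset.Icc 1 (q + 1), ((i : ℝ) + β)) * |s| ^ (((q + 1 : ℕ) : ℝ) + β)
        = C * (|s| ^ (a + 1) / (a + 1)) := by
      rw [hprod, hexp, hC_def]
      have h1 : a + 1 = ((q:ℝ) + 1) + β := by rw [ha_def]; ring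
      rw [← h1]
      have hA : a + 1 ≠ 0 := by positivity
      field_simp
      try ring
    rw [hrhs]
    exact main

lemma iteratedDeriv_iteratedDeriv' (f : ℝ → ℝ) (j : ℕ) :
    ∀ m : ℕ, iteratedDeriv m (iteratedDeriv j f) = iteratedDeriv (m + j) f := by
  intro m
  induction m with
  | zero => simp
  | succ m ih =>
    rw [show m + 1 + j = m + j + 1 from by omega, iteratedDeriv_succ, ih, ← iteratedDeriv_succ]

theorem stmt_2 (p : ℕ) (hp : 1 ≤ p) (β L : ℝ) (hβ0 : 0 < β) (hβ1 : β ≤ 1) (hL : 0 ≤ L)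
    (f : ℝ → ℝ) (hf : ContDiff ℝ p f)
    (hHol : ∀ x y : ℝ, |iteratedDeriv p f x - iteratedDeriv p f y| ≤ L * |x - y| ^ β) :
    ∀ j : ℕ, 1 ≤ j → j ≤ p → ∀ x s : ℝ,
      |iteratedDeriv j f (x + s)
          - iteratedDeriv j (fun t : ℝ => ∑ ℓ ∈ Finset.range (p + 1),
              iteratedDeriv ℓ f x * t ^ ℓ / (Nat.factorial ℓ)) s|
        ≤ L / (∏ i ∈ Finset.Icc 1 (p - j), ((i : ℝ) + β)) * |s| ^ ((p : ℝ) - (j : ℝ) + β) := by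
  intro j hj1 hjp x s
  set q := p - j with hq_def
  have hq : q + j = p := Nat.sub_add_cancel hjp
  have hg : ContDiff ℝ q (iteratedDeriv j f) := by
    rw [iteratedDeriv_eq_iterate]
    apply ContDiff.iterate_deriv' q j
    rw [hq]
    exact hf
  have hHolg : ∀ x y : ℝ, |iteratedDeriv q (iteratedDeriv j f) x
      - iteratedDeriv q (iteratedDeriv j f) y| ≤ L * |x - y| ^ β := by
    intro x y
    rw [iteratedDeriv_iteratedDeriv', hq]
    exact hHol x y
  have hT := iteratedDeriv_polysum (fun ℓ => iteratedDeriv ℓ f x) p j hjp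
  have key := aux_remainder β L hβ0 hL q (iteratedDeriv j f) hg hHolg x s
  simp only [iteratedDeriv_iteratedDeriv'] at key
  rw [hT]
  have hcast : ((q : ℕ) : ℝ) = (p : ℝ) - (j : ℝ) := by
    rw [hq_def, Nat.cast_sub hjp]
  rw [show (p : ℝ) - (j : ℝ) + β = (q : ℝ) + β by rw [hcast]]
  exact key
end

section
/- Let f : ℝⁿ → ℝ be q times continuously differentiable with ∇^q f β-Hölder continuous with constant L (β ∈ (0,1]) on an open neighbourhood of radius δ ∈ (0,1] of a point x ∈ F ⊆ ℝⁿ. Define φ_{f,q}^δ(x) = f(x) - min{ T_q(x,d) : x+d ∈ F, ‖d‖ ≤ δ }, where T_q(x,d) is the q-th order Taylor polynomial of f at x, and χ_q(δ) = ∑_{ℓ=1}^{q} δ^ℓ/ℓ!. If φ_{f,q}^δ(x) ≤ ε χ_q(δ), then f(x+d) ≥ f(x) - 2ε χ_q(δ) for all d with x+d ∈ F and ‖d‖ ≤ min[δ, ((q+1)! ε / L)^{1/(q+β-1)}]. -/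
open Set Filter Topology

lemma key_taylor (β : ℝ) (hβ : 0 < β) (M : ℝ) (hM0 : 0 ≤ M) :
    ∀ q : ℕ, ∀ g : ℝ → ℝ, ContDiff ℝ q g →
    (∀ t ∈ Set.Icc (0:ℝ) 1, |iteratedDeriv q g t - iteratedDeriv q g 0| ≤ M * t ^ β) →
    ∀ s ∈ Set.Icc (0:ℝ) 1,
      |g s - ∑ ℓ ∈ Finset.range (q+1), s ^ ℓ * iteratedDeriv ℓ g 0 / (Nat.factorial ℓ)|
        ≤ M * s ^ ((q:ℝ) + β) / ∏ ℓ ∈ Finset.Icc 1 q, (β + (ℓ:ℝ)) := by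
  intro q
  induction q with
  | zero =>
    intro g hg hM s hs
    simpa using hM s hs
  | succ q IH =>
    intro g hg hM s hs
    have hg' : Differentiable ℝ g ∧ ContDiff ℝ q (deriv g) := by
      have : ContDiff ℝ ((q:WithTop ℕ∞) + 1) g := by exact_mod_cast hg
      rw [contDiff_succ_iff_deriv] at this
      exact ⟨this.1, this.2.2⟩
    set h : ℝ → ℝ := deriv g with hh
    have hM' : ∀ t ∈ Set.Icc (0:ℝ) 1, |iteratedDeriv q h t - iteratedDeriv q h 0| ≤ M * t ^ β := by
      intro t ht
      have := hM t ht
      simp only [hh]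
      rwa [iteratedDeriv_succ'] at this
    have bnd := IH h hg'.2 hM'
    -- Q = Taylor polynomial of h of degree q
    set Q : ℝ → ℝ := fun t => ∑ ℓ ∈ Finset.range (q+1), t ^ ℓ * iteratedDeriv ℓ h 0 / (Nat.factorial ℓ) with hQ
    set P : ℝ → ℝ := fun t => ∑ ℓ ∈ Finset.range (q+2), t ^ ℓ * iteratedDeriv ℓ g 0 / (Nat.factorial ℓ) with hP
    have hPd : ∀ t : ℝ, HasDerivAt P (Q t) t := by
      intro t
      have H : HasDerivAt P (∑ ℓ ∈ Finset.range (q+2),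
          ((ℓ : ℝ) * t ^ (ℓ-1)) * (iteratedDeriv ℓ g 0 / (Nat.factorial ℓ))) t := by
        apply HasDerivAt.fun_sum
        intro ℓ _
        simpa [mul_div_assoc] using (hasDerivAt_pow ℓ t).mul_const (iteratedDeriv ℓ g 0 / (Nat.factorial ℓ))
      convert H using 1
      rw [Finset.sum_range_succ' _ (q+1)]
      simp only [Nat.cast_zero, zero_mul, mul_zero, add_zero, pow_zero, Nat.cast_succ, zero_add]
      rw [hQ]
      apply Finset.sum_congr rfl
      intro j _
      have hfac : ((Nat.factorial (j+1) : ℝ)) = (j+1) * Nat.factorial j := by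
        rw [Nat.factorial_succ]; push_cast; ring
      have hne : ((j:ℝ)+1) ≠ 0 := by positivity
      have hfne : ((Nat.factorial j : ℝ)) ≠ 0 := by positivity
      have hDj : iteratedDeriv (j+1) g 0 = iteratedDeriv j h 0 := by
        rw [iteratedDeriv_succ', hh]
      rw [hDj] at *
      field_simp [hfac]
      rw [Nat.add_sub_cancel, hfac]
      ring
    have hs0 : (0:ℝ) ≤ s := hs.1
    have hs1 : s ≤ 1 := hs.2
    set E : ℝ → ℝ := fun t => g t - P t with hE
    have hEd : ∀ t : ℝ, HasDerivAt E (h t - Q t) t := fun t =>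
      ((hg'.1 t).hasDerivAt).sub (hPd t)
    have hQc : Continuous Q := by
      apply continuous_finset_sum
      intro ℓ _
      exact ((continuous_pow ℓ).mul continuous_const).div_const _
    have hhc : Continuous h := hg'.2.continuous
    have hE0 : E 0 = 0 := by
      simp only [hE, hP, Finset.sum_range_succ' _ (q+1)]
      simp
    have hFTC : E s = ∫ t in (0:ℝ)..s, (h t - Q t) := by
      rw [intervalIntegral.integral_eq_sub_of_hasDerivAt (fun t _ => hEd t)
        ((hhc.sub hQc).intervalIntegrable 0 s), hE0, sub_zero]
    have hrpos : (0:ℝ) < (q:ℝ) + β := by positivity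
    have hcont_r : Continuous (fun t : ℝ => t ^ ((q:ℝ) + β)) := by
      rw [continuous_iff_continuousAt]
      exact fun t => Real.continuousAt_rpow_const t _ (Or.inr hrpos.le)
    have hprodpos : (0:ℝ) < ∏ ℓ ∈ Finset.Icc 1 q, (β + (ℓ:ℝ)) := by
      apply Finset.prod_pos; intro ℓ hℓ; positivity
    have hbound : |E s| ≤ ∫ t in (0:ℝ)..s, M * t ^ ((q:ℝ) + β) / ∏ ℓ ∈ Finset.Icc 1 q, (β + (ℓ:ℝ)) := by
      rw [hFTC]
      have h1 : |∫ t in (0:ℝ)..s, (h t - Q t)| ≤ ∫ t in (0:ℝ)..s, |h t - Q t| :=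
        intervalIntegral.abs_integral_le_integral_abs hs0
      refine h1.trans ?_
      apply intervalIntegral.integral_mono_on hs0
      · exact ((hhc.sub hQc).abs.intervalIntegrable 0 s)
      · exact (((continuous_const.mul hcont_r).div_const _).intervalIntegrable 0 s)
      · intro t ht
        exact bnd t ⟨ht.1, ht.2.trans hs1⟩
    have hint : (∫ t in (0:ℝ)..s, M * t ^ ((q:ℝ) + β) / ∏ ℓ ∈ Finset.Icc 1 q, (β + (ℓ:ℝ)))
        = M * s ^ (((q:ℕ)+1:ℝ) + β) / ∏ ℓ ∈ Finset.Icc 1 (q+1), (β + (ℓ:ℝ)) := by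
      have : (fun t : ℝ => M * t ^ ((q:ℝ) + β) / ∏ ℓ ∈ Finset.Icc 1 q, (β + (ℓ:ℝ)))
          = fun t : ℝ => (M / ∏ ℓ ∈ Finset.Icc 1 q, (β + (ℓ:ℝ))) * t ^ ((q:ℝ) + β) := by
        funext t; ring
      rw [this, intervalIntegral.integral_const_mul, integral_rpow (Or.inl (by linarith)),
        Real.zero_rpow (by positivity), Finset.prod_Icc_succ_top (by omega : 1 ≤ q+1), sub_zero]
      have e1 : (((q:ℕ)+1:ℝ)) + β = (q:ℝ) + β + 1 := by push_cast; ring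
      have e2 : β + (((q+1:ℕ)):ℝ) = (q:ℝ) + β + 1 := by push_cast; ring
      rw [e1, e2]
      have h2 : ((q:ℝ) + β + 1) ≠ 0 := by positivity
      field_simp
    calc |g s - ∑ ℓ ∈ Finset.range (q+1+1), s ^ ℓ * iteratedDeriv ℓ g 0 / (Nat.factorial ℓ)|
        = |E s| := rfl
      _ ≤ _ := hbound
      _ = _ := by rw [hint]; push_cast; ring_nf

lemma diag_deriv {E : Type*} [NormedAddCommGroup E] [NormedSpace ℝ E]
    (f : E → ℝ) (q : ℕ) (hf : ContDiff ℝ q f) (x d : E) :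
    ∀ ℓ : ℕ, ℓ ≤ q → ∀ t : ℝ,
      iteratedDeriv ℓ (fun t : ℝ => f (x + t • d)) t
        = iteratedFDeriv ℝ ℓ f (x + t • d) (fun _ => d) := by
  intro ℓ
  induction ℓ with
  | zero => intro _ t; simp [iteratedDeriv_zero]
  | succ ℓ IH =>
    intro hℓ t
    have hIH : iteratedDeriv ℓ (fun t : ℝ => f (x + t • d))
        = fun t : ℝ => iteratedFDeriv ℝ ℓ f (x + t • d) (fun _ => d) :=
      funext (IH (by omega))
    rw [iteratedDeriv_succ, hIH]
    have hline : HasDerivAt (fun t : ℝ => x + t • d) d t := by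
      simpa using ((hasDerivAt_id t).smul_const d).const_add x
    have hdiff : Differentiable ℝ (iteratedFDeriv ℝ ℓ f) :=
      hf.differentiable_iteratedFDeriv (by exact_mod_cast (by omega : ℓ < q))
    have hcomp : HasDerivAt (fun t : ℝ => iteratedFDeriv ℝ ℓ f (x + t • d))
        (fderiv ℝ (iteratedFDeriv ℝ ℓ f) (x + t • d) d) t :=
      (hdiff (x + t • d)).hasFDerivAt.comp_hasDerivAt t hline
    have happ : HasDerivAt (fun t : ℝ => iteratedFDeriv ℝ ℓ f (x + t • d) (fun _ => d))
        ((fderiv ℝ (iteratedFDeriv ℝ ℓ f) (x + t • d) d) (fun _ => d)) t :=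
      ((ContinuousMultilinearMap.apply ℝ (fun _ : Fin ℓ => E) ℝ
        (fun _ => d)).hasFDerivAt).comp_hasDerivAt t hcomp
    rw [happ.deriv, iteratedFDeriv_succ_apply_left]
    rfl

theorem stmt_7 (n q : ℕ) (hq : 1 ≤ q) (β L ε δ : ℝ)
    (hβ0 : 0 < β) (hβ1 : β ≤ 1) (hL : 0 < L) (hε : 0 < ε) (hδ0 : 0 < δ) (hδ1 : δ ≤ 1)
    (F : Set (EuclideanSpace ℝ (Fin n))) (hFne : F.Nonempty) (hFcl : IsClosed F)
    (f : EuclideanSpace ℝ (Fin n) → ℝ) (x : EuclideanSpace ℝ (Fin n)) (hx : x ∈ F)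
    (hf : ContDiff ℝ q f)
    (hHol : ∀ y ∈ Metric.ball x δ, ∀ z ∈ Metric.ball x δ,
      ‖iteratedFDeriv ℝ q f y - iteratedFDeriv ℝ q f z‖ ≤ L * ‖y - z‖ ^ β)
    (hphi : f x - sInf ((fun d => ∑ ℓ ∈ Finset.range (q + 1),
        (iteratedFDeriv ℝ ℓ f x fun _ => d) / (Nat.factorial ℓ)) ''
        {d | x + d ∈ F ∧ ‖d‖ ≤ δ})
      ≤ ε * ∑ ℓ ∈ Finset.Icc 1 q, δ ^ ℓ / (Nat.factorial ℓ)) :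
    ∀ d : EuclideanSpace ℝ (Fin n), x + d ∈ F →
      ‖d‖ ≤ min δ (((∏ ℓ ∈ Finset.Icc 1 q, (β + (ℓ : ℝ))) * ε / L) ^ (1 / ((q : ℝ) + β - 1))) →
      f (x + d) ≥ f x - 2 * ε * ∑ ℓ ∈ Finset.Icc 1 q, δ ^ ℓ / (Nat.factorial ℓ) := by
  intro d hdF hdle
  set χ : ℝ := ∑ ℓ ∈ Finset.Icc 1 q, δ ^ ℓ / (Nat.factorial ℓ) with hχ
  have hχδ : δ ≤ χ := by
    have h1 : δ ^ 1 / (Nat.factorial 1 : ℝ) ≤ χ := by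
      apply Finset.single_le_sum (f := fun ℓ => δ ^ ℓ / (Nat.factorial ℓ : ℝ))
      · intro ℓ _; positivity
      · simp [Finset.mem_Icc, hq]
    simpa using h1
  have hχpos : (0:ℝ) < χ := lt_of_lt_of_le hδ0 hχδ
  have hdδ : ‖d‖ ≤ δ := le_trans hdle (min_le_left _ _)
  set P : ℝ := ∏ ℓ ∈ Finset.Icc 1 q, (β + (ℓ:ℝ)) with hP
  have hPpos : 0 < P := Finset.prod_pos (fun ℓ hℓ => by positivity)
  -- Step A : T d ≥ f x - ε χ
  set T : EuclideanSpace ℝ (Fin n) → ℝ := fun d => ∑ ℓ ∈ Finset.range (q + 1),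
      (iteratedFDeriv ℝ ℓ f x fun _ => d) / (Nat.factorial ℓ) with hT
  have hTc : Continuous T := by
    apply continuous_finset_sum
    intro ℓ _
    exact ((iteratedFDeriv ℝ ℓ f x).cont.comp (continuous_pi fun _ => continuous_id)).div_const _
  set K : Set (EuclideanSpace ℝ (Fin n)) := {d | x + d ∈ F ∧ ‖d‖ ≤ δ} with hK
  have hKcl : IsClosed K := by
    have : K = ((fun d => x + d) ⁻¹' F) ∩ {d | ‖d‖ ≤ δ} := rfl
    rw [this]
    exact (hFcl.preimage (continuous_const.add continuous_id)).inter
      (isClosed_le continuous_norm continuous_const)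
  have hKcp : IsCompact K := by
    apply (isCompact_closedBall (0 : EuclideanSpace ℝ (Fin n)) δ).of_isClosed_subset hKcl
    intro y hy
    simpa [mem_closedBall_zero_iff] using hy.2
  have hbdd : BddBelow (T '' K) := (hKcp.image hTc).bddBelow
  have hmem : T d ∈ T '' K := ⟨d, ⟨hdF, hdδ⟩, rfl⟩
  have hTd : f x - T d ≤ ε * χ := by
    have := csInf_le hbdd hmem
    have h2 : f x - sInf (T '' K) ≤ ε * χ := hphi
    linarith
  by_cases hd0 : d = 0
  · subst hd0
    simp only [add_zero, ge_iff_le]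
    nlinarith [mul_pos hε hχpos]
  -- Step B : Taylor remainder bound
  have hr : (0:ℝ) < ‖d‖ := norm_pos_iff.mpr hd0
  set g : ℝ → ℝ := fun t => f (x + t • d) with hg
  have hgc : ContDiff ℝ q g := hf.comp (contDiff_const.add (contDiff_id.smul contDiff_const))
  have hdiag := diag_deriv f q hf x d
  -- Hölder along the segment, extended to the closed endpoint
  have hHol2 : ∀ t ∈ Set.Icc (0:ℝ) 1,
      ‖iteratedFDeriv ℝ q f (x + t • d) - iteratedFDeriv ℝ q f x‖ ≤ L * (t ^ β * ‖d‖ ^ β) := by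
    have hIco : ∀ t ∈ Set.Ico (0:ℝ) 1,
        ‖iteratedFDeriv ℝ q f (x + t • d) - iteratedFDeriv ℝ q f x‖ ≤ L * (t ^ β * ‖d‖ ^ β) := by
      intro t ht
      have hmem1 : x + t • d ∈ Metric.ball x δ := by
        rw [Metric.mem_ball, dist_eq_norm, add_sub_cancel_left, norm_smul,
          Real.norm_of_nonneg ht.1]
        calc t * ‖d‖ ≤ t * δ := by nlinarith [ht.1, hdδ]
          _ < δ := by nlinarith [ht.2, hδ0]
      have := hHol _ hmem1 x (Metric.mem_ball_self hδ0)
      rw [add_sub_cancel_left, norm_smul, Real.norm_of_nonneg ht.1,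
        Real.mul_rpow ht.1 (norm_nonneg d)] at this
      linarith
    intro t ht
    rcases lt_or_eq_of_le ht.2 with h1 | h1
    · exact hIco t ⟨ht.1, h1⟩
    · subst h1
      -- continuity argument at t = 1
      set u : ℝ → ℝ := fun t => ‖iteratedFDeriv ℝ q f (x + t • d) - iteratedFDeriv ℝ q f x‖
      set v : ℝ → ℝ := fun t => L * (t ^ β * ‖d‖ ^ β)
      have hu : ContinuousAt u 1 := by
        apply ContinuousAt.norm
        apply ContinuousAt.sub _ continuousAt_const
        exact ((hf.continuous_iteratedFDeriv le_rfl).comp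
          (continuous_const.add (continuous_id.smul continuous_const))).continuousAt
      have hv : ContinuousAt v 1 := by
        apply continuousAt_const.mul
        exact (Real.continuousAt_rpow_const 1 β (Or.inl one_ne_zero)).mul continuousAt_const
      have hne : (𝓝[Set.Iio (1:ℝ)] 1).NeBot := inferInstance
      have hut : Filter.Tendsto u (nhdsWithin (1:ℝ) (Set.Iio 1)) (nhds (u 1)) :=
        hu.tendsto.mono_left nhdsWithin_le_nhds
      have hvt : Filter.Tendsto v (nhdsWithin (1:ℝ) (Set.Iio 1)) (nhds (v 1)) :=
        hv.tendsto.mono_left nhdsWithin_le_nhds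
      apply le_of_tendsto_of_tendsto hut hvt
      filter_upwards [Ioo_mem_nhdsLT_of_mem (⟨zero_lt_one, le_refl (1:ℝ)⟩ : (1:ℝ) ∈ Set.Ioc 0 1)]
        with t ht'
      exact hIco t ⟨ht'.1.le, ht'.2⟩
  set M : ℝ := L * (‖d‖ ^ β * ‖d‖ ^ q) with hM
  have hM0 : 0 ≤ M := by positivity
  have hMhyp : ∀ t ∈ Set.Icc (0:ℝ) 1, |iteratedDeriv q g t - iteratedDeriv q g 0| ≤ M * t ^ β := by
    intro t ht
    rw [hdiag q le_rfl t, hdiag q le_rfl 0]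
    simp only [zero_smul, add_zero]
    have h1 : iteratedFDeriv ℝ q f (x + t • d) (fun _ => d) - iteratedFDeriv ℝ q f x (fun _ => d)
        = (iteratedFDeriv ℝ q f (x + t • d) - iteratedFDeriv ℝ q f x) (fun _ => d) := by
      simp [ContinuousMultilinearMap.sub_apply]
    rw [h1]
    calc |(iteratedFDeriv ℝ q f (x + t • d) - iteratedFDeriv ℝ q f x) (fun _ => d)|
        ≤ ‖iteratedFDeriv ℝ q f (x + t • d) - iteratedFDeriv ℝ q f x‖ * ∏ _i : Fin q, ‖d‖ :=
          (iteratedFDeriv ℝ q f (x + t • d) - iteratedFDeriv ℝ q f x).le_opNorm _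
      _ = ‖iteratedFDeriv ℝ q f (x + t • d) - iteratedFDeriv ℝ q f x‖ * ‖d‖ ^ q := by
          rw [Finset.prod_const]; simp
      _ ≤ (L * (t ^ β * ‖d‖ ^ β)) * ‖d‖ ^ q := by
          apply mul_le_mul_of_nonneg_right (hHol2 t ht) (by positivity)
      _ = M * t ^ β := by rw [hM]; ring
  have hkey := key_taylor β hβ0 M hM0 q g hgc hMhyp 1 ⟨zero_le_one, le_rfl⟩
  have hg1 : g 1 = f (x + d) := by rw [hg]; simp
  have hsum : ∑ ℓ ∈ Finset.range (q+1), (1:ℝ) ^ ℓ * iteratedDeriv ℓ g 0 / (Nat.factorial ℓ) = T d := by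
    apply Finset.sum_congr rfl
    intro ℓ hℓ
    rw [hdiag ℓ (by simpa [Nat.lt_succ_iff] using hℓ) 0]
    simp
  rw [hg1, hsum, Real.one_rpow, mul_one] at hkey
  -- Step C : arithmetic
  set e : ℝ := (q:ℝ) + β - 1 with he
  have hepos : 0 < e := by
    have : (1:ℝ) ≤ (q:ℝ) := by exact_mod_cast hq
    simp only [he]; linarith
  have hdθ : ‖d‖ ≤ (P * ε / L) ^ (1 / e) := le_trans hdle (min_le_right _ _)
  have h1 : ‖d‖ ^ e ≤ P * ε / L := by
    calc ‖d‖ ^ e ≤ ((P * ε / L) ^ (1 / e)) ^ e := Real.rpow_le_rpow hr.le hdθ hepos.le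
      _ = P * ε / L := by
        rw [← Real.rpow_mul (by positivity), one_div_mul_cancel hepos.ne', Real.rpow_one]
  have hM_bound : M / P ≤ ε * ‖d‖ := by
    have hd_pow : ‖d‖ ^ β * ‖d‖ ^ q = ‖d‖ ^ e * ‖d‖ := by
      rw [← Real.rpow_natCast ‖d‖ q, ← Real.rpow_add hr, ← Real.rpow_add_one hr.ne']
      congr 1
      rw [he]; ring
    have h2 : M ≤ P * ε * ‖d‖ := by
      rw [hM, hd_pow]
      calc L * (‖d‖ ^ e * ‖d‖) ≤ L * ((P * ε / L) * ‖d‖) := by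
            apply mul_le_mul_of_nonneg_left _ hL.le
            exact mul_le_mul_of_nonneg_right h1 hr.le
        _ = P * ε * ‖d‖ := by field_simp
    rw [div_le_iff₀ hPpos]
    nlinarith [h2]
  have hfinal : M / P ≤ ε * χ := by
    calc M / P ≤ ε * ‖d‖ := hM_bound
      _ ≤ ε * χ := mul_le_mul_of_nonneg_left (hdδ.trans hχδ) hε.le
  have habs := abs_le.mp hkey
  linarith [habs.1, hTd, hfinal]
end

section
/- Let f : ℝ → ℝ be p times continuously differentiable with β-Hölder continuous p-th derivative with constant L. Suppose at iterate x with step s satisfying m(s) < m(0), where m(s) = T_p(x,s) + (σ/(p+β)!)|s|^{p+β}, the ratio ρ = (f(x) - f(x+s))/(T_p(x,0) - T_p(x,s)) is formed. If σ ≥ L/(1-η₂) for some η₂ ∈ (0,1), then ρ ≥ η₂. -/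
open Finset Set

private lemma key_right (g g' : ℝ → ℝ) (C α : ℝ) (hα : 0 < α) (hC : 0 ≤ C)
    (hg : ∀ t, HasDerivAt g (g' t) t) (h0 : g 0 = 0)
    (hbd : ∀ t, |g' t| ≤ C * |t| ^ α) {b : ℝ} (hb0 : 0 ≤ b) :
    |g b| ≤ C / (α + 1) * b ^ (α + 1) := by
  have hα1 : (1:ℝ) ≤ α + 1 := by linarith
  have hα0 : α + 1 ≠ 0 := by positivity
  have hBd : ∀ u : ℝ, HasDerivAt (fun t : ℝ => C / (α + 1) * t ^ (α + 1)) (C * u ^ α) u := by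
    intro u
    have h := (Real.hasDerivAt_rpow_const (x := u) (p := α + 1) (Or.inr hα1)).const_mul
      (C / (α + 1))
    have : C / (α + 1) * ((α + 1) * u ^ (α + 1 - 1)) = C * u ^ α := by
      rw [show α + 1 - 1 = α by ring]
      field_simp
    rwa [this] at h
  have := image_norm_le_of_norm_deriv_right_le_deriv_boundary
    (f := g) (f' := g') (a := 0) (b := b)
    (fun t _ => (hg t).continuousAt.continuousWithinAt)
    (fun t _ => (hg t).hasDerivWithinAt.mono (by intro y hy; exact hy))
    (B := fun t => C / (α + 1) * t ^ (α + 1)) (B' := fun t => C * t ^ α)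
    (by simp [h0, Real.zero_rpow hα0])
    hBd
    (fun t ht => by
      rw [Real.norm_eq_abs]
      calc |g' t| ≤ C * |t| ^ α := hbd t
        _ = C * t ^ α := by rw [abs_of_nonneg ht.1])
  exact this (by simp [hb0] : b ∈ Icc (0:ℝ) b)

private lemma key (g g' : ℝ → ℝ) (x₀ C α : ℝ) (hα : 0 < α) (hC : 0 ≤ C)
    (hg : ∀ t, HasDerivAt g (g' t) t) (h0 : g x₀ = 0)
    (hbd : ∀ t, |g' t| ≤ C * |t - x₀| ^ α) (t : ℝ) :
    |g t| ≤ C / (α + 1) * |t - x₀| ^ (α + 1) := by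
  rcases le_total x₀ t with h | h
  · have := key_right (fun u => g (x₀ + u)) (fun u => g' (x₀ + u)) C α hα hC
      (fun u => by simpa [Function.comp_def] using (hg (x₀ + u)).comp u ((hasDerivAt_id u).const_add x₀))
      (by simpa using h0)
      (fun u => by simpa using hbd (x₀ + u))
      (b := t - x₀) (by linarith)
    simpa [abs_of_nonneg (by linarith : (0:ℝ) ≤ t - x₀)] using this
  · have := key_right (fun u => g (x₀ - u)) (fun u => -g' (x₀ - u)) C α hα hC
      (fun u => by
        have := (hg (x₀ - u)).comp u ((hasDerivAt_id u).const_sub x₀)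
        simpa [Function.comp_def] using this)
      (by simpa using h0)
      (fun u => by simpa [abs_sub_comm] using hbd (x₀ - u))
      (b := x₀ - t) (by linarith)
    simpa [abs_sub_comm t x₀, abs_of_nonneg (by linarith : (0:ℝ) ≤ x₀ - t)] using this

theorem stmt_9 (p : ℕ) (hp : 1 ≤ p) (β L σ η₂ : ℝ)
    (hβ0 : 0 < β) (hβ1 : β ≤ 1) (hL : 0 ≤ L) (hη : 0 < η₂) (hη1 : η₂ < 1)
    (f : ℝ → ℝ) (hf : ContDiff ℝ p f)
    (hHol : ∀ x y : ℝ, |iteratedDeriv p f x - iteratedDeriv p f y| ≤ L * |x - y| ^ β)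
    (x s : ℝ) (T : ℝ → ℝ)
    (hT : ∀ t, T t = ∑ ℓ ∈ Finset.range (p + 1),
      iteratedDeriv ℓ f x * t ^ ℓ / (Nat.factorial ℓ))
    (hm : T s + σ / (∏ ℓ ∈ Finset.Icc 1 p, (β + (ℓ : ℝ))) * |s| ^ ((p : ℝ) + β) < T 0)
    (hσ : σ ≥ L / (1 - η₂)) :
    (f x - f (x + s)) / (T 0 - T s) ≥ η₂ := by
  -- main Taylor-Hölder bound, by downward induction
  have main : ∀ k, k ≤ p → ∀ t : ℝ,
      |iteratedDeriv (p - k) f t -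
        ∑ j ∈ range (k + 1), iteratedDeriv (p - k + j) f x * (t - x) ^ j / (Nat.factorial j)|
        ≤ L / (∏ i ∈ Icc 1 k, (β + (i:ℝ))) * |t - x| ^ (β + (k:ℝ)) := by
    intro k
    induction k with
    | zero =>
      intro _ t
      simpa using hHol t x
    | succ k ih =>
      intro hk1 t
      have hk : k ≤ p := by omega
      set Q : ℝ := ∏ i ∈ Icc 1 k, (β + (i:ℝ)) with hQ
      have hQpos : 0 < Q := Finset.prod_pos (fun i hi => by
        have : (0:ℝ) ≤ i := Nat.cast_nonneg i
        linarith)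
      set g : ℝ → ℝ := fun u => iteratedDeriv (p - (k+1)) f u -
        ∑ j ∈ range (k + 2), iteratedDeriv (p - (k+1) + j) f x * (u - x) ^ j /
          (Nat.factorial j) with hgdef
      set g' : ℝ → ℝ := fun u => iteratedDeriv (p - k) f u -
        ∑ j ∈ range (k + 1), iteratedDeriv (p - k + j) f x * (u - x) ^ j /
          (Nat.factorial j) with hg'def
      have hderiv : ∀ u, HasDerivAt g (g' u) u := by
        intro u
        have h1 : HasDerivAt (iteratedDeriv (p - (k+1)) f) (iteratedDeriv (p - k) f u) u := by
          have hlt : p - (k+1) < p := by omega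
          have hd : Differentiable ℝ (iteratedDeriv (p - (k+1)) f) :=
            hf.differentiable_iteratedDeriv _ (by exact_mod_cast hlt)
          have hh := hd.differentiableAt (x := u) |>.hasDerivAt
          have hidx : p - k = (p - (k+1)) + 1 := by omega
          rwa [hidx, iteratedDeriv_succ]
        have h2 : HasDerivAt (fun u => ∑ j ∈ range (k + 2),
            iteratedDeriv (p - (k+1) + j) f x * (u - x) ^ j / (Nat.factorial j))
            (∑ j ∈ range (k + 1), iteratedDeriv (p - k + j) f x * (u - x) ^ j /
              (Nat.factorial j)) u := by
          have hterm : ∀ j ∈ range (k + 2), HasDerivAt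
              (fun u => iteratedDeriv (p - (k+1) + j) f x * (u - x) ^ j / (Nat.factorial j))
              (iteratedDeriv (p - (k+1) + j) f x * ((j:ℝ) * (u - x) ^ (j-1)) /
                (Nat.factorial j)) u := by
            intro j _
            have hb : HasDerivAt (fun u : ℝ => (u - x) ^ j) ((j:ℝ) * (u - x) ^ (j-1) * 1) u :=
              ((hasDerivAt_id u).sub_const x).pow j
            simpa [mul_comm, mul_assoc, mul_left_comm] using
              ((hb.const_mul (iteratedDeriv (p - (k+1) + j) f x)).div_const
                (Nat.factorial j))
          have hsum := HasDerivAt.sum hterm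
          have heq : (∑ j ∈ range (k + 2), iteratedDeriv (p - (k+1) + j) f x *
              ((j:ℝ) * (u - x) ^ (j-1)) / (Nat.factorial j))
              = ∑ j ∈ range (k + 1), iteratedDeriv (p - k + j) f x * (u - x) ^ j /
                (Nat.factorial j) := by
            rw [Finset.sum_range_succ']
            simp only [Nat.cast_zero, zero_mul, mul_zero, zero_div, add_zero]
            apply Finset.sum_congr rfl
            intro j _
            have hidx : p - (k+1) + (j+1) = p - k + j := by omega
            have hfact : ((Nat.factorial (j+1)) : ℝ) = ((j:ℝ)+1) * Nat.factorial j := by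
              push_cast [Nat.factorial_succ]; ring
            rw [hidx, hfact]
            have hj1 : ((j:ℝ) + 1) ≠ 0 := by positivity
            have hjf : ((Nat.factorial j : ℝ)) ≠ 0 := by positivity
            push_cast
            field_simp
          rw [heq, Finset.sum_fn] at hsum
          exact hsum
        exact h1.sub h2
      have hgx : g x = 0 := by
        simp only [hgdef]
        rw [Finset.sum_range_succ']
        simp
      have hbd : ∀ u, |g' u| ≤ (L / Q) * |u - x| ^ (β + (k:ℝ)) := ih hk
      have := key g g' x (L / Q) (β + k) (by positivity) (by positivity) hderiv hgx hbd t
      calc |g t| ≤ L / Q / (β + (k:ℝ) + 1) * |t - x| ^ (β + (k:ℝ) + 1) := this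
        _ = L / (∏ i ∈ Icc 1 (k+1), (β + (i:ℝ))) * |t - x| ^ (β + ((k:ℕ)+1:ℝ)) := by
            rw [Finset.prod_Icc_succ_top (by omega : 1 ≤ k + 1)]
            push_cast
            rw [div_div, ← hQ]
            ring_nf
        _ = L / (∏ i ∈ Icc 1 (k+1), (β + ((i:ℕ):ℝ))) * |t - x| ^ (β + ((k+1:ℕ):ℝ)) := by
            push_cast; ring_nf
  -- specialize to k = p
  have hrem : |f (x + s) - T s| ≤
      L / (∏ i ∈ Icc 1 p, (β + (i:ℝ))) * |s| ^ ((p:ℝ) + β) := by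
    have := main p le_rfl (x + s)
    simp only [Nat.sub_self, iteratedDeriv_zero, Nat.zero_add, zero_add] at this
    rw [hT s]
    calc |f (x + s) - ∑ ℓ ∈ range (p+1), iteratedDeriv ℓ f x * s ^ ℓ / (Nat.factorial ℓ)|
        = |f (x + s) - ∑ j ∈ range (p+1), iteratedDeriv j f x * (x + s - x) ^ j /
            (Nat.factorial j)| := by norm_num
      _ ≤ L / (∏ i ∈ Icc 1 p, (β + (i:ℝ))) * |x + s - x| ^ (β + (p:ℝ)) := this
      _ = L / (∏ i ∈ Icc 1 p, (β + (i:ℝ))) * |s| ^ ((p:ℝ) + β) := by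
          rw [add_comm β (p:ℝ)]; norm_num
  -- arithmetic conclusion
  set Q : ℝ := ∏ i ∈ Icc 1 p, (β + (i:ℝ)) with hQ
  have hQpos : 0 < Q := Finset.prod_pos (fun i hi => by
    have : (0:ℝ) ≤ i := Nat.cast_nonneg i
    linarith)
  set R : ℝ := |s| ^ ((p:ℝ) + β) with hR
  have hRpos : 0 ≤ R := by positivity
  have h1η : 0 < 1 - η₂ := by linarith
  have hσ0 : 0 ≤ σ := le_trans (by positivity) hσ
  have hL' : L ≤ σ * (1 - η₂) := by
    rw [ge_iff_le, div_le_iff₀ h1η] at hσ; exact hσ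
  have hTgt : σ / Q * R < T 0 - T s := by linarith
  have hTpos : 0 < T 0 - T s := lt_of_le_of_lt (by positivity) hTgt
  have hnum : η₂ * (T 0 - T s) ≤ f x - f (x + s) := by
    have hfx : f x = T 0 := by
      rw [hT 0, Finset.sum_range_succ']
      simp
    have h2 : f (x + s) - T s ≤ L / Q * R := (abs_le.mp hrem).2
    have h3 : L / Q * R ≤ (1 - η₂) * (σ / Q * R) := by
      have : L / Q ≤ (1 - η₂) * (σ / Q) := by
        rw [div_le_iff₀ hQpos] at *
        calc L ≤ σ * (1 - η₂) := hL'
          _ = (1 - η₂) * (σ / Q) * Q := by field_simp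
      nlinarith
    have h4 : (1 - η₂) * (σ / Q * R) ≤ (1 - η₂) * (T 0 - T s) := by nlinarith
    nlinarith [hfx]
  rw [ge_iff_le, le_div_iff₀ hTpos]
  linarith
end

section
/- Let p ≥ 1 and q ∈ {1,…,p} be integers, ε ∈ (0,1), ζ(q,p) = (p-q+1)/(q(p+1)) and χ_q(1) = ∑_{ℓ=1}^{q} 1/ℓ!. Let k_ε = ⌈ε^{-(p+1)/(p-q+1)}⌉, ω_k = ε(k_ε - k)/k_ε, and define f_0 = 2[2q χ_q(1)]^{(p+1)/(p-q+1)}, f_{k+1} = f_k - ζ(q,p)[q(ε+ω_k)χ_q(1)]^{(p+1)/(p-q+1)}. Then 0 ≤ f_k ≤ 2[2q χ_q(1)]^{(p+1)/(p-q+1)} for all k ∈ {0,…,k_ε}. -/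
theorem stmt_11 (p q : ℕ) (hp : 1 ≤ p) (hq : 1 ≤ q) (hqp : q ≤ p)
    (ε : ℝ) (hε0 : 0 < ε) (hε1 : ε < 1)
    (keps : ℕ) (hkeps : keps = ⌈ε ^ (-(((p : ℝ) + 1) / ((p : ℝ) - (q : ℝ) + 1)))⌉₊)
    (ω : ℕ → ℝ) (hω : ∀ k, ω k = ε * ((keps : ℝ) - (k : ℝ)) / (keps : ℝ))
    (χ : ℝ) (hχ : χ = ∑ ℓ ∈ Finset.Icc 1 q, (1 : ℝ) / (Nat.factorial ℓ))
    (f : ℕ → ℝ)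
    (hf0 : f 0 = 2 * (2 * (q : ℝ) * χ) ^ (((p : ℝ) + 1) / ((p : ℝ) - (q : ℝ) + 1)))
    (hfrec : ∀ k, f (k + 1) = f k - ((p : ℝ) - (q : ℝ) + 1) / ((q : ℝ) * ((p : ℝ) + 1)) *
      ((q : ℝ) * (ε + ω k) * χ) ^ (((p : ℝ) + 1) / ((p : ℝ) - (q : ℝ) + 1))) :
    ∀ k ≤ keps, 0 ≤ f k ∧
      f k ≤ 2 * (2 * (q : ℝ) * χ) ^ (((p : ℝ) + 1) / ((p : ℝ) - (q : ℝ) + 1)) := by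
  have hp1 : (1:ℝ) ≤ (p:ℝ) := by exact_mod_cast hp
  have hq1 : (1:ℝ) ≤ (q:ℝ) := by exact_mod_cast hq
  have hqp' : (q:ℝ) ≤ (p:ℝ) := by exact_mod_cast hqp
  have hden : (0:ℝ) < (p:ℝ) - (q:ℝ) + 1 := by linarith
  set α : ℝ := ((p:ℝ)+1)/((p:ℝ)-(q:ℝ)+1) with hα
  have hαpos : 0 < α := div_pos (by linarith) hden
  have hχpos : 0 < χ := by
    rw [hχ]
    apply Finset.sum_pos
    · intro i _; positivity
    · exact ⟨1, Finset.mem_Icc.2 ⟨le_refl 1, hq⟩⟩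
  set ζ : ℝ := ((p:ℝ)-(q:ℝ)+1)/((q:ℝ)*((p:ℝ)+1)) with hζ
  have hζpos : 0 < ζ := div_pos hden (by nlinarith)
  have hζle : ζ ≤ 1 := by
    rw [hζ, div_le_one (by nlinarith)]
    nlinarith
  have hkpos : 0 < keps := by
    rw [hkeps]
    exact Nat.one_le_ceil_iff.2 (Real.rpow_pos_of_pos hε0 _)
  have hkR : (0:ℝ) < (keps:ℝ) := by exact_mod_cast hkpos
  have hA0 : (0:ℝ) ≤ 2*(q:ℝ)*χ := by positivity
  set A : ℝ := (2*(q:ℝ)*χ) ^ α with hA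
  have hApos : 0 < A := Real.rpow_pos_of_pos (by positivity) _
  have hεα : (0:ℝ) < ε ^ α := Real.rpow_pos_of_pos hε0 _
  set B : ℝ := ζ * A * ε ^ α with hB
  have hBpos : 0 < B := by positivity
  clear_value α ζ A B
  have hstep : ∀ j : ℕ, j < keps → ζ * ((q:ℝ)*(ε + ω j)*χ) ^ α ≤ B ∧
      0 ≤ ζ * ((q:ℝ)*(ε + ω j)*χ) ^ α := by
    intro j hj
    have hjR : (j:ℝ) ≤ (keps:ℝ) := by exact_mod_cast hj.le
    have hω0 : 0 ≤ ω j := by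
      rw [hω j]
      exact div_nonneg (mul_nonneg hε0.le (by linarith)) hkR.le
    have hωε : ω j ≤ ε := by
      rw [hω j, div_le_iff₀ hkR]
      nlinarith
    have hbase0 : 0 ≤ (q:ℝ)*(ε+ω j)*χ := by
      have : 0 ≤ ε + ω j := by linarith
      positivity
    have hbase : (q:ℝ)*(ε+ω j)*χ ≤ ε * (2*(q:ℝ)*χ) := by nlinarith
    have h1 : ((q:ℝ)*(ε+ω j)*χ)^α ≤ (ε * (2*(q:ℝ)*χ))^α :=
      Real.rpow_le_rpow hbase0 hbase hαpos.le
    have h2 : (ε * (2*(q:ℝ)*χ))^α = ε^α * A := by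
      rw [hA, Real.mul_rpow hε0.le hA0]
    refine ⟨?_, mul_nonneg hζpos.le (Real.rpow_nonneg hbase0 _)⟩
    calc ζ * ((q:ℝ)*(ε+ω j)*χ)^α ≤ ζ * (ε^α * A) := by
          rw [← h2]; exact mul_le_mul_of_nonneg_left h1 hζpos.le
      _ = B := by rw [hB]; ring
  have key : ∀ k, k ≤ keps → f 0 - k * B ≤ f k ∧ f k ≤ f 0 := by
    intro k
    induction k with
    | zero => intro _; simp
    | succ n ih =>
      intro hn
      have hn' : n < keps := Nat.lt_of_succ_le hn
      obtain ⟨h1, h2⟩ := ih hn'.le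
      obtain ⟨hs1, hs2⟩ := hstep n hn'
      rw [hfrec n]
      constructor
      · push_cast; linarith
      · linarith
  have hkle : (keps:ℝ) ≤ ε^(-α) + 1 := by
    rw [hkeps]
    exact (Nat.ceil_lt_add_one (Real.rpow_nonneg hε0.le _)).le
  have hinv : ε^(-α) * ε^α = 1 := by
    rw [← Real.rpow_add hε0]; simp
  have hεα1 : ε^α ≤ 1 := Real.rpow_le_one hε0.le hε1.le hαpos.le
  have hkB : (keps:ℝ) * B ≤ 2 * A := by
    calc (keps:ℝ) * B ≤ (ε^(-α)+1) * B := mul_le_mul_of_nonneg_right hkle hBpos.le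
      _ = ζ*A*(ε^(-α)*ε^α) + ζ*A*ε^α := by rw [hB]; ring
      _ = ζ*A + ζ*A*ε^α := by rw [hinv]; ring
      _ ≤ 2*A := by
          have e1 : ζ*A ≤ A := by
            have := mul_le_mul_of_nonneg_right hζle hApos.le
            linarith
          have e2 : ζ*A*ε^α ≤ ζ*A := by
            have := mul_le_mul_of_nonneg_left hεα1 (mul_nonneg hζpos.le hApos.le)
            nlinarith
          linarith
  intro k hk
  obtain ⟨h1, h2⟩ := key k hk
  have hkk : (k:ℝ) * B ≤ (keps:ℝ) * B := by
    have : (k:ℝ) ≤ (keps:ℝ) := by exact_mod_cast hk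
    exact mul_le_mul_of_nonneg_right this hBpos.le
  constructor
  · have : f 0 = 2 * A := hf0
    linarith
  · rw [← hf0]; exact h2
end

section
/- Let A_p be the (p+1)×(p+1) matrix with entries a_{i,j} = (p+j+1)!/(p+j+1-i)! for i,j = 0,…,p. Let π(τ) = ∑_{i=0}^{2p+1} c_i τ^i be the degree-(2p+1) polynomial satisfying π^{(i)}(0) = f_0^{(i)} and π^{(i)}(s) = f_1^{(i)} for i = 0,…,p, with s > 0. If there exists κ_f ≥ 0 such that |f_1^{(j)} - T_p^{(j)}(0,s)| ≤ κ_f s^{p-j+1} for all j = 0,…,p, where T_p(0,τ) = ∑_{i=0}^{p} f_0^{(i)} τ^i/i!, then for all τ₁, τ₂ ∈ [0,s], |π^{(p)}(τ₁) - π^{(p)}(τ₂)| ≤ L_p |τ₁ - τ₂| with L_p = ((p+1)(2p+1)!/p!) ‖A_p^{-1}‖_∞ κ_f, assuming A_p is invertible. -/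
open Polynomial in
theorem evalDj (p j : ℕ) (hj : j ≤ p) (D : Polynomial ℝ) (s : ℝ)
    (hD : D.natDegree ≤ 2*p+1)
    (hlow : ∀ m ≤ p, D.coeff m = 0) :
    (Polynomial.derivative^[j] D).eval s
      = ∑ k ∈ Finset.range (p+1),
          ((p+1+k).descFactorial j : ℝ) * D.coeff (p+1+k) * s^(p+1-j+k) := by
  have hdegj : (Polynomial.derivative^[j] D).natDegree < 2*p+2 :=
    lt_of_le_of_lt (le_trans (D.natDegree_iterate_derivative j) (Nat.sub_le _ _)) (by omega)
  rw [Polynomial.eval_eq_sum_range' hdegj]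
  have hco : ∀ n, (Polynomial.derivative^[j] D).coeff n
      = ((n+j).descFactorial j : ℝ) * D.coeff (n+j) := by
    intro n
    rw [Polynomial.coeff_iterate_derivative, nsmul_eq_mul]
  simp only [hco]
  set F : ℕ → ℝ := fun n => ((n+j).descFactorial j : ℝ) * D.coeff (n+j) * s^n with hF
  have hinj : ∀ a ∈ Finset.range (p+1), ∀ b ∈ Finset.range (p+1),
      p+1-j+a = p+1-j+b → a = b := by intro a _ b _ h; omega
  have key : ∑ n ∈ Finset.range (2*p+2), F n
      = ∑ n ∈ (Finset.range (p+1)).image (fun k => p+1-j+k), F n := by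
    refine (Finset.sum_subset ?_ ?_).symm
    · intro x hx
      simp only [Finset.mem_image, Finset.mem_range] at hx
      obtain ⟨k, hk, rfl⟩ := hx
      exact Finset.mem_range.2 (by omega)
    · intro n hn hnot
      simp only [Finset.mem_image, Finset.mem_range] at hn hnot
      push_neg at hnot
      rcases lt_or_ge n (p+1-j) with h | h
      · simp only [hF]; rw [hlow _ (by omega)]; ring
      · have h2 : 2*p+1 < n+j := by
          by_contra hc
          push_neg at hc
          exact hnot (n-(p+1-j)) (by omega) (by omega)
        simp only [hF]
        rw [Polynomial.coeff_eq_zero_of_natDegree_lt (lt_of_le_of_lt hD h2)]; ring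
  rw [key, Finset.sum_image hinj]
  refine Finset.sum_congr rfl fun k hk => ?_
  simp only [hF]
  rw [show p+1-j+k+j = p+1+k by omega]

theorem stmt_13 (p : ℕ) (f0 f1 : ℕ → ℝ) (s : ℝ) (hs : 0 < s)
    (A : Matrix (Fin (p + 1)) (Fin (p + 1)) ℝ)
    (hA : ∀ i j : Fin (p + 1),
      A i j = (Nat.factorial (p + (j : ℕ) + 1) : ℝ) / (Nat.factorial (p + (j : ℕ) + 1 - (i : ℕ)) : ℝ))
    (hAinv : IsUnit A.det)
    (π : Polynomial ℝ) (hdeg : π.natDegree ≤ 2 * p + 1)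
    (hinterp0 : ∀ i ≤ p, (Polynomial.derivative^[i] π).eval 0 = f0 i)
    (hinterps : ∀ i ≤ p, (Polynomial.derivative^[i] π).eval s = f1 i)
    (κf : ℝ) (hκf : 0 ≤ κf)
    (hdata : ∀ j ≤ p,
      |f1 j - (Polynomial.derivative^[j]
          (∑ i ∈ Finset.range (p + 1),
            Polynomial.C (f0 i / (Nat.factorial i)) * Polynomial.X ^ i)).eval s|
        ≤ κf * s ^ (p - j + 1)) :
    ∀ τ₁ ∈ Set.Icc (0:ℝ) s, ∀ τ₂ ∈ Set.Icc (0:ℝ) s,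
      |(Polynomial.derivative^[p] π).eval τ₁ - (Polynomial.derivative^[p] π).eval τ₂|
        ≤ (((p : ℝ) + 1) * (Nat.factorial (2 * p + 1) : ℝ) / (Nat.factorial p : ℝ))
            * (Finset.univ.sup' Finset.univ_nonempty (fun i => ∑ j, |(A⁻¹) i j|)) * κf
            * |τ₁ - τ₂| := by
  intro τ₁ hτ₁ τ₂ hτ₂
  set T : Polynomial ℝ := ∑ i ∈ Finset.range (p + 1),
      Polynomial.C (f0 i / (Nat.factorial i)) * Polynomial.X ^ i with hTdef
  set M : ℝ := Finset.univ.sup' Finset.univ_nonempty (fun i => ∑ j, |(A⁻¹) i j|) with hMdef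
  -- coefficients of π below degree p+1
  have hcoeff0 : ∀ i ≤ p, π.coeff i = f0 i / (Nat.factorial i : ℝ) := by
    intro i hi
    have h := hinterp0 i hi
    rw [← Polynomial.coeff_zero_eq_eval_zero, Polynomial.coeff_iterate_derivative] at h
    simp only [Nat.zero_add, Nat.descFactorial_self, nsmul_eq_mul] at h
    have hne : ((Nat.factorial i : ℝ)) ≠ 0 := Nat.cast_ne_zero.2 (Nat.factorial_pos i).ne'
    field_simp [← h]
    rw [← h]; ring
  -- coefficients of T
  have hTc : ∀ m, T.coeff m = if m < p + 1 then f0 m / (Nat.factorial m : ℝ) else 0 := by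
    intro m
    simp [hTdef, Polynomial.finset_sum_coeff, Polynomial.coeff_C_mul, Polynomial.coeff_X_pow,
      Finset.sum_ite_eq, Finset.mem_range]
  set D : Polynomial ℝ := π - T with hDdef
  have hDlow : ∀ m ≤ p, D.coeff m = 0 := by
    intro m hm
    rw [hDdef, Polynomial.coeff_sub, hcoeff0 m hm, hTc m, if_pos (by omega), sub_self]
  have hDhigh : ∀ m, p < m → D.coeff m = π.coeff m := by
    intro m hm
    rw [hDdef, Polynomial.coeff_sub, hTc m, if_neg (by omega), sub_zero]
  have hTdeg : T.natDegree ≤ 2*p+1 := by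
    refine le_trans (Polynomial.natDegree_sum_le_of_forall_le _ _ fun i hi => ?_) le_rfl
    refine le_trans (Polynomial.natDegree_C_mul_le _ _) ?_
    simp only [Polynomial.natDegree_X_pow]
    exact le_trans (Nat.lt_succ_iff.1 (Finset.mem_range.1 hi)) (by omega)
  have hDdeg : D.natDegree ≤ 2*p+1 := by
    rw [hDdef]
    exact le_trans (Polynomial.natDegree_sub_le _ _) (max_le hdeg hTdeg)
  -- the linear system
  set y : Fin (p+1) → ℝ := fun k => π.coeff (p+1+(k:ℕ)) * s^(k:ℕ) with hy
  have hAentry : ∀ i k : Fin (p+1),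
      A i k = ((p+1+(k:ℕ)).descFactorial (i:ℕ) : ℝ) := by
    intro i k
    have hik : (i:ℕ) ≤ p + (k:ℕ) + 1 := by omega
    have hfd := Nat.factorial_mul_descFactorial hik
    have hne : ((Nat.factorial (p + (k:ℕ) + 1 - (i:ℕ)) : ℝ)) ≠ 0 :=
      Nat.cast_ne_zero.2 (Nat.factorial_pos _).ne'
    have hfd' : (p+(k:ℕ)+1).factorial
        = (p+(k:ℕ)+1).descFactorial (i:ℕ) * (p+(k:ℕ)+1-(i:ℕ)).factorial := by
      rw [mul_comm]; exact hfd.symm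
    rw [hA i k, div_eq_iff hne]
    rw [show p+1+(k:ℕ) = p+(k:ℕ)+1 by ring]
    exact_mod_cast congrArg (Nat.cast (R := ℝ)) hfd'
  have hmulVec : ∀ j : Fin (p+1),
      s^(p+1-(j:ℕ)) * (A.mulVec y j) = (Polynomial.derivative^[(j:ℕ)] D).eval s := by
    intro j
    rw [evalDj p (j:ℕ) (by omega) D s hDdeg hDlow]
    rw [Matrix.mulVec, dotProduct]
    rw [Finset.mul_sum, ← Fin.sum_univ_eq_sum_range
      (fun k => ((p+1+k).descFactorial (j:ℕ) : ℝ) * D.coeff (p+1+k) * s^(p+1-(j:ℕ)+k))]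
    refine Finset.sum_congr rfl fun k _ => ?_
    rw [hAentry j k, hDhigh _ (by omega), hy, pow_add]
    ring
  have hb : ∀ j : Fin (p+1), |A.mulVec y j| ≤ κf := by
    intro j
    have hd := hdata (j:ℕ) (by omega)
    have heval : (Polynomial.derivative^[(j:ℕ)] D).eval s
        = f1 (j:ℕ) - (Polynomial.derivative^[(j:ℕ)] T).eval s := by
      rw [hDdef, Polynomial.iterate_derivative_sub, Polynomial.eval_sub,
        hinterps (j:ℕ) (by omega)]
    have h1 : s^(p+1-(j:ℕ)) * |A.mulVec y j| ≤ κf * s^(p+1-(j:ℕ)) := by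
      have hsp : (0:ℝ) ≤ s^(p+1-(j:ℕ)) := le_of_lt (pow_pos hs _)
      calc s^(p+1-(j:ℕ)) * |A.mulVec y j|
          = |s^(p+1-(j:ℕ)) * (A.mulVec y j)| := by
            rw [abs_mul, abs_of_nonneg hsp]
        _ = |f1 (j:ℕ) - (Polynomial.derivative^[(j:ℕ)] T).eval s| := by
            rw [hmulVec j, heval]
        _ ≤ κf * s ^ (p - (j:ℕ) + 1) := hd
        _ = κf * s^(p+1-(j:ℕ)) := by rw [show p - (j:ℕ) + 1 = p+1-(j:ℕ) by omega]
    have hsp : (0:ℝ) < s^(p+1-(j:ℕ)) := pow_pos hs _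
    nlinarith [abs_nonneg (A.mulVec y j)]
  have hMnn : 0 ≤ M := by
    refine le_trans (Finset.sum_nonneg fun j _ => abs_nonneg _)
      (Finset.le_sup' (fun i => ∑ j, |(A⁻¹) i j|) (Finset.mem_univ (0 : Fin (p+1))))
  have hyb : ∀ k : Fin (p+1), |y k| ≤ M * κf := by
    intro k
    have hid : y = A⁻¹.mulVec (A.mulVec y) := by
      rw [Matrix.mulVec_mulVec, Matrix.nonsing_inv_mul A hAinv, Matrix.one_mulVec]
    have hexp : y k = ∑ j, (A⁻¹) k j * (A.mulVec y) j := by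
      conv_lhs => rw [hid]
      simp [Matrix.mulVec, dotProduct]
    calc |y k| = |∑ j, (A⁻¹) k j * (A.mulVec y) j| := by rw [hexp]
      _ ≤ ∑ j, |(A⁻¹) k j * (A.mulVec y) j| := Finset.abs_sum_le_sum_abs _ _
      _ ≤ ∑ j, |(A⁻¹) k j| * κf := by
          refine Finset.sum_le_sum fun j _ => ?_
          rw [abs_mul]
          exact mul_le_mul_of_nonneg_left (hb j) (abs_nonneg _)
      _ = (∑ j, |(A⁻¹) k j|) * κf := by rw [Finset.sum_mul]
      _ ≤ M * κf := mul_le_mul_of_nonneg_right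
          (Finset.le_sup' (fun i => ∑ j, |(A⁻¹) i j|) (Finset.mem_univ k)) hκf
  -- coefficient bound
  have hcb : ∀ k : ℕ, k ≤ p → |π.coeff (p+1+k)| * s^k ≤ M * κf := by
    intro k hk
    have := hyb ⟨k, by omega⟩
    rw [hy] at this
    simp only at this
    rw [abs_mul, abs_of_nonneg (le_of_lt (pow_pos hs k))] at this
    exact this
  -- bound the (p+1)-st derivative on [0,s]
  set r : Polynomial ℝ := Polynomial.derivative^[p+1] π with hr
  set C : ℝ := (((p : ℝ) + 1) * (Nat.factorial (2 * p + 1) : ℝ) / (Nat.factorial p : ℝ)) * M * κf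
    with hC
  have hDmax : ((Nat.factorial p : ℝ)) * ((2*p+1).descFactorial (p+1) : ℝ)
      = (Nat.factorial (2*p+1) : ℝ) := by
    have := Nat.factorial_mul_descFactorial (show p+1 ≤ 2*p+1 by omega)
    rw [show 2*p+1-(p+1) = p by omega] at this
    exact_mod_cast congrArg (Nat.cast (R := ℝ)) this
  have hrbound : ∀ τ ∈ Set.Icc (0:ℝ) s, |r.eval τ| ≤ C := by
    intro τ hτ
    obtain ⟨hτ0, hτs⟩ := hτ
    have hrdeg : r.natDegree < p+1 := by
      have h1 := π.natDegree_iterate_derivative (p+1)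
      rw [← hr] at h1
      omega
    rw [Polynomial.eval_eq_sum_range' hrdeg]
    have hrc : ∀ n, r.coeff n = ((n+(p+1)).descFactorial (p+1) : ℝ) * π.coeff (n+(p+1)) := by
      intro n
      rw [hr, Polynomial.coeff_iterate_derivative, nsmul_eq_mul]
    calc |∑ k ∈ Finset.range (p+1), r.coeff k * τ^k|
        ≤ ∑ k ∈ Finset.range (p+1), |r.coeff k * τ^k| := Finset.abs_sum_le_sum_abs _ _
      _ ≤ ∑ k ∈ Finset.range (p+1), ((2*p+1).descFactorial (p+1) : ℝ) * (M * κf) := by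
          refine Finset.sum_le_sum fun k hk => ?_
          have hk' : k ≤ p := by have := Finset.mem_range.1 hk; omega
          rw [hrc k, abs_mul, abs_mul, abs_pow, abs_of_nonneg hτ0,
            Nat.abs_cast, mul_assoc]
          have h1 : |π.coeff (k+(p+1))| * τ^k ≤ M * κf := by
            calc |π.coeff (k+(p+1))| * τ^k ≤ |π.coeff (k+(p+1))| * s^k :=
                  mul_le_mul_of_nonneg_left (pow_le_pow_left₀ hτ0 hτs k) (abs_nonneg _)
              _ = |π.coeff (p+1+k)| * s^k := by rw [show k+(p+1) = p+1+k by ring]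
              _ ≤ M * κf := hcb k hk'
          have h2 : ((k+(p+1)).descFactorial (p+1) : ℝ) ≤ ((2*p+1).descFactorial (p+1) : ℝ) := by
            exact_mod_cast Nat.descFactorial_le (p+1) (show k+(p+1) ≤ 2*p+1 by omega)
          calc ((k+(p+1)).descFactorial (p+1) : ℝ) * (|π.coeff (k+(p+1))| * τ^k)
              ≤ ((k+(p+1)).descFactorial (p+1) : ℝ) * (M * κf) :=
                mul_le_mul_of_nonneg_left h1 (Nat.cast_nonneg _)
            _ ≤ ((2*p+1).descFactorial (p+1) : ℝ) * (M * κf) :=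
                mul_le_mul_of_nonneg_right h2 (mul_nonneg hMnn hκf)
      _ = ((p:ℝ)+1) * (((2*p+1).descFactorial (p+1) : ℝ) * (M * κf)) := by
          rw [Finset.sum_const, Finset.card_range, nsmul_eq_mul]
          push_cast; ring
      _ = C := by
          rw [hC]
          have hpne : ((Nat.factorial p : ℝ)) ≠ 0 := Nat.cast_ne_zero.2 (Nat.factorial_pos p).ne'
          field_simp [← hDmax]
          ring_nf at hDmax ⊢
          linear_combination (M*κf) * hDmax
  -- mean value inequality
  have hderiv : ∀ x ∈ Set.Icc (0:ℝ) s,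
      HasDerivWithinAt (fun t => (Polynomial.derivative^[p] π).eval t) (r.eval x)
        (Set.Icc (0:ℝ) s) x := by
    intro x _
    have := (Polynomial.hasDerivAt (Polynomial.derivative^[p] π) x).hasDerivWithinAt
      (s := Set.Icc (0:ℝ) s)
    rwa [show Polynomial.derivative (Polynomial.derivative^[p] π) = r by
      rw [hr, Function.iterate_succ_apply']] at this
  have := (convex_Icc (0:ℝ) s).norm_image_sub_le_of_norm_hasDerivWithin_le hderiv
    (fun x hx => by rw [Real.norm_eq_abs]; exact hrbound x hx) hτ₂ hτ₁
  rw [Real.norm_eq_abs, Real.norm_eq_abs] at this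
  exact this
end
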